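/- Let C be a hermitian category. The assignment F(M,s) = ((M,M, s* ∘ ω_M, s), (id_M, id_M^op)) on objects and F(ψ) = (ψ, (ψ⁻¹)^op) on isometries defines a functor F : Sesq(C) → Herm_1(TDA(C)), and F is an equivalence of categories between the category of sesquilinear forms over C and the category of unimodular 1-hermitian forms over TDA(C). -/

import Mathlib

open CategoryTheory CategoryTheory.Limits

noncomputable section

universe v u

namespace HermCat

variable {C : Type u} [Category.{v} C] [Preadditive C]

/-- A hermitian structure on an additive category `C`: a contravariant additive
functor `*` together with a natural transformation `ω : id → **` satisfying
`(ω_X)* ∘ ω_{X*} = id_{X*}`. -/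
structure HermStructure (C : Type u) [Category.{v} C] [Preadditive C] where
  star : C → C
  starMap : ∀ {X Y : C}, (X ⟶ Y) → (star Y ⟶ star X)
  starMap_id : ∀ X : C, starMap (𝟙 X) = 𝟙 (star X)
  starMap_comp : ∀ {X Y Z : C} (f : X ⟶ Y) (g : Y ⟶ Z),
    starMap (f ≫ g) = starMap g ≫ starMap f
  starMap_add : ∀ {X Y : C} (f g : X ⟶ Y), starMap (f + g) = starMap f + starMap g
  omega : ∀ X : C, X ⟶ star (star X)
  omega_natural : ∀ {X Y : C} (f : X ⟶ Y),
    f ≫ omega Y = omega X ≫ starMap (starMap f)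
  omega_star : ∀ X : C, omega (star X) ≫ starMap (omega X) = 𝟙 (star X)

namespace HermStructure

variable (H : HermStructure C)

/-- The additive-monoid-hom incarnation of `starMap`. -/
def starHom (X Y : C) : (X ⟶ Y) →+ (H.star Y ⟶ H.star X) :=
  AddMonoidHom.mk' H.starMap (fun f g => H.starMap_add f g)

theorem starMap_zero (X Y : C) : H.starMap (0 : X ⟶ Y) = 0 :=
  (H.starHom X Y).map_zero

theorem starMap_neg {X Y : C} (f : X ⟶ Y) : H.starMap (-f) = -H.starMap f :=
  (H.starHom X Y).map_neg f

theorem starMap_sub {X Y : C} (f g : X ⟶ Y) :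
    H.starMap (f - g) = H.starMap f - H.starMap g :=
  (H.starHom X Y).map_sub f g

theorem starMap_nsmul {X Y : C} (n : ℕ) (f : X ⟶ Y) :
    H.starMap (n • f) = n • H.starMap f :=
  (H.starHom X Y).map_nsmul n f

theorem starMap_zsmul {X Y : C} (n : ℤ) (f : X ⟶ Y) :
    H.starMap (n • f) = n • H.starMap f :=
  (H.starHom X Y).map_zsmul n f

/-- An object is reflexive if `ω_X` is an isomorphism. -/
def Reflexive (X : C) : Prop := IsIso (H.omega X)

/-- A sesquilinear form `s : M ⟶ M*` is unimodular if `s` and `s* ∘ ω_M` are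
isomorphisms. -/
def IsUnimodular {M : C} (s : M ⟶ H.star M) : Prop :=
  IsIso s ∧ IsIso (H.omega M ≫ H.starMap s)

/-- A sesquilinear form `s : M ⟶ M*` is `ε`-hermitian if `s = ε • (s* ∘ ω_M)`. -/
def IsEpsHermitian (ε : ℤ) {M : C} (s : M ⟶ H.star M) : Prop :=
  s = ε • (H.omega M ≫ H.starMap s)

/-- `f` is an isometry from `(M, s)` to `(M', s')` if it is an isomorphism with
`s = f* ∘ s' ∘ f`. -/
def IsIsometry {M M' : C} (s : M ⟶ H.star M) (s' : M' ⟶ H.star M')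
    (f : M ⟶ M') : Prop :=
  IsIso f ∧ s = f ≫ s' ≫ H.starMap f

/-- Two sesquilinear forms are isometric if there is an isometry between them. -/
def Isometric {M M' : C} (s : M ⟶ H.star M) (s' : M' ⟶ H.star M') : Prop :=
  ∃ f : M ⟶ M', H.IsIsometry s s' f

section Biprod

variable [HasBinaryBiproducts C]

/-- The underlying object `Q ⊕ Q*` of the hyperbolic form. -/
def hypObj (Q : C) : C := Q ⊞ H.star Q

/-- The hyperbolic `ε`-hermitian form `H_ε(Q)` on `Q ⊕ Q*`, given in matrix form
by `[[0, id_{Q*}], [ε·ω_Q, 0]]` (composed with the canonical identification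
`Q* ⊕ Q** ≅ (Q ⊕ Q*)*`). -/
def hypForm (ε : ℤ) (Q : C) : H.hypObj Q ⟶ H.star (H.hypObj Q) :=
  biprod.lift (biprod.snd) (ε • (biprod.fst ≫ H.omega Q)) ≫
    biprod.desc (H.starMap biprod.fst) (H.starMap biprod.snd)

/-- A form is hyperbolic (as a unimodular `ε`-hermitian form) if it is isometric
to `(Q ⊕ Q*, H_ε(Q))` for some reflexive object `Q`. -/
def IsHyperbolic (ε : ℤ) {M : C} (s : M ⟶ H.star M) : Prop :=
  ∃ Q : C, H.Reflexive Q ∧ H.Isometric s (H.hypForm ε Q)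

/-- The orthogonal sum of two sesquilinear forms. -/
def orthSum {M M' : C} (s : M ⟶ H.star M) (s' : M' ⟶ H.star M') :
    M ⊞ M' ⟶ H.star (M ⊞ M') :=
  biprod.desc (s ≫ H.starMap biprod.fst) (s' ≫ H.starMap biprod.snd)

/-- The "split" form `[[0, f], [g, 0]]` on `M ⊕ N`, where `f : N ⟶ M*` and
`g : M ⟶ N*`. -/
def splitForm {M N : C} (f : N ⟶ H.star M) (g : M ⟶ H.star N) :
    M ⊞ N ⟶ H.star (M ⊞ N) :=
  biprod.desc (g ≫ H.starMap biprod.snd) (f ≫ H.starMap biprod.fst)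

end Biprod

end HermStructure

/-! ## The category of twisted double arrows -/

variable {ι : Type v}

/-- Objects of the category `TDA_I(C)` of twisted double `I`-arrows: quadruples
`(M, N, {f_i}, {g_i})` with `f_i, g_i : M ⟶ N^{*_i}`. -/
structure TDAObj (Hs : ι → HermStructure C) : Type (max u v) where
  M : C
  N : C
  f : ∀ i, M ⟶ (Hs i).star N
  g : ∀ i, M ⟶ (Hs i).star N

namespace TDAObj

variable {Hs : ι → HermStructure C}

/-- Morphisms `(M,N,{f_i},{g_i}) ⟶ (M',N',{f'_i},{g'_i})` in `TDA_I(C)`: pairs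
`(φ, ψ^op)` with `φ : M ⟶ M'`, `ψ : N' ⟶ N`, `f'_i ∘ φ = ψ^{*_i} ∘ f_i` and
`g'_i ∘ φ = ψ^{*_i} ∘ g_i`. -/
@[ext]
structure Hom (Z Z' : TDAObj Hs) : Type v where
  φ : Z.M ⟶ Z'.M
  ψ : Z'.N ⟶ Z.N
  condf : ∀ i, φ ≫ Z'.f i = Z.f i ≫ (Hs i).starMap ψ
  condg : ∀ i, φ ≫ Z'.g i = Z.g i ≫ (Hs i).starMap ψ

instance category : Category (TDAObj Hs) where
  Hom := Hom
  id Z := ⟨𝟙 Z.M, 𝟙 Z.N, fun i => by simp [(Hs i).starMap_id],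
    fun i => by simp [(Hs i).starMap_id]⟩
  comp {Z Z' Z''} u v := ⟨u.φ ≫ v.φ, v.ψ ≫ u.ψ,
    fun i => by
      rw [Category.assoc, v.condf i, ← Category.assoc, u.condf i, (Hs i).starMap_comp,
        Category.assoc],
    fun i => by
      rw [Category.assoc, v.condg i, ← Category.assoc, u.condg i, (Hs i).starMap_comp,
        Category.assoc]⟩
  id_comp u := by apply Hom.ext <;> simp
  comp_id u := by apply Hom.ext <;> simp
  assoc u v w := by apply Hom.ext <;> simp

@[simp] theorem id_φ (Z : TDAObj Hs) : Hom.φ (𝟙 Z) = 𝟙 Z.M := rfl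
@[simp] theorem id_ψ (Z : TDAObj Hs) : Hom.ψ (𝟙 Z) = 𝟙 Z.N := rfl
@[simp] theorem comp_φ {Z Z' Z'' : TDAObj Hs} (u : Z ⟶ Z') (v : Z' ⟶ Z'') :
    (u ≫ v).φ = u.φ ≫ v.φ := rfl
@[simp] theorem comp_ψ {Z Z' Z'' : TDAObj Hs} (u : Z ⟶ Z') (v : Z' ⟶ Z'') :
    (u ≫ v).ψ = v.ψ ≫ u.ψ := rfl

theorem hom_ext {Z Z' : TDAObj Hs} {u v : Z ⟶ Z'} (h1 : Hom.φ u = Hom.φ v)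
    (h2 : Hom.ψ u = Hom.ψ v) : u = v := Hom.ext h1 h2

instance homZero (Z Z' : TDAObj Hs) : Zero (Z ⟶ Z') :=
  ⟨⟨0, 0, fun i => by simp [(Hs i).starMap_zero], fun i => by simp [(Hs i).starMap_zero]⟩⟩

instance homAdd (Z Z' : TDAObj Hs) : Add (Z ⟶ Z') :=
  ⟨fun u v => ⟨u.φ + v.φ, u.ψ + v.ψ,
    fun i => by simp [Preadditive.add_comp, Preadditive.comp_add, (Hs i).starMap_add,
      u.condf i, v.condf i],
    fun i => by simp [Preadditive.add_comp, Preadditive.comp_add, (Hs i).starMap_add,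
      u.condg i, v.condg i]⟩⟩

instance homNeg (Z Z' : TDAObj Hs) : Neg (Z ⟶ Z') :=
  ⟨fun u => ⟨-u.φ, -u.ψ,
    fun i => by simp [Preadditive.neg_comp, Preadditive.comp_neg, (Hs i).starMap_neg,
      u.condf i],
    fun i => by simp [Preadditive.neg_comp, Preadditive.comp_neg, (Hs i).starMap_neg,
      u.condg i]⟩⟩

instance homSub (Z Z' : TDAObj Hs) : Sub (Z ⟶ Z') :=
  ⟨fun u v => ⟨u.φ - v.φ, u.ψ - v.ψ,
    fun i => by simp [Preadditive.sub_comp, Preadditive.comp_sub, (Hs i).starMap_sub,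
      u.condf i, v.condf i],
    fun i => by simp [Preadditive.sub_comp, Preadditive.comp_sub, (Hs i).starMap_sub,
      u.condg i, v.condg i]⟩⟩

instance homSMulNat (Z Z' : TDAObj Hs) : SMul ℕ (Z ⟶ Z') :=
  ⟨fun n u => ⟨n • u.φ, n • u.ψ,
    fun i => by simp [Preadditive.nsmul_comp, Preadditive.comp_nsmul, (Hs i).starMap_nsmul,
      u.condf i],
    fun i => by simp [Preadditive.nsmul_comp, Preadditive.comp_nsmul, (Hs i).starMap_nsmul,
      u.condg i]⟩⟩

instance homSMulInt (Z Z' : TDAObj Hs) : SMul ℤ (Z ⟶ Z') :=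
  ⟨fun n u => ⟨n • u.φ, n • u.ψ,
    fun i => by simp [Preadditive.zsmul_comp, Preadditive.comp_zsmul, (Hs i).starMap_zsmul,
      u.condf i],
    fun i => by simp [Preadditive.zsmul_comp, Preadditive.comp_zsmul, (Hs i).starMap_zsmul,
      u.condg i]⟩⟩

@[simp] theorem add_φ {Z Z' : TDAObj Hs} (u v : Z ⟶ Z') : (u + v).φ = u.φ + v.φ := rfl
@[simp] theorem add_ψ {Z Z' : TDAObj Hs} (u v : Z ⟶ Z') : (u + v).ψ = u.ψ + v.ψ := rfl
@[simp] theorem zero_φ {Z Z' : TDAObj Hs} : (0 : Z ⟶ Z').φ = 0 := rfl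
@[simp] theorem zero_ψ {Z Z' : TDAObj Hs} : (0 : Z ⟶ Z').ψ = 0 := rfl
@[simp] theorem neg_φ {Z Z' : TDAObj Hs} (u : Z ⟶ Z') : (-u).φ = -u.φ := rfl
@[simp] theorem neg_ψ {Z Z' : TDAObj Hs} (u : Z ⟶ Z') : (-u).ψ = -u.ψ := rfl

instance homAddCommGroup (Z Z' : TDAObj Hs) : AddCommGroup (Z ⟶ Z') :=
  Function.Injective.addCommGroup (fun u => (Hom.φ u, Hom.ψ u))
    (fun u v h => by
      apply hom_ext
      · exact congrArg Prod.fst h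
      · exact congrArg Prod.snd h)
    rfl (fun _ _ => rfl) (fun _ => rfl) (fun _ _ => rfl) (fun _ _ => rfl) (fun _ _ => rfl)

instance preadditive : Preadditive (TDAObj Hs) where
  add_comp Z Z' Z'' u u' v := by apply hom_ext <;> simp
  comp_add Z Z' Z'' u v v' := by apply hom_ext <;> simp

end TDAObj

/-- The hermitian structure on the category of twisted double `I`-arrows. -/
def tdaHerm (Hs : ι → HermStructure C) : HermStructure (TDAObj Hs) where
  star Z := ⟨Z.N, Z.M, fun i => (Hs i).omega Z.N ≫ (Hs i).starMap (Z.g i),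
    fun i => (Hs i).omega Z.N ≫ (Hs i).starMap (Z.f i)⟩
  starMap {Z Z'} u := ⟨u.ψ, u.φ,
    fun i => by
      rw [← Category.assoc, (Hs i).omega_natural u.ψ, Category.assoc, Category.assoc,
        ← (Hs i).starMap_comp, ← u.condg i, (Hs i).starMap_comp],
    fun i => by
      rw [← Category.assoc, (Hs i).omega_natural u.ψ, Category.assoc, Category.assoc,
        ← (Hs i).starMap_comp, ← u.condf i, (Hs i).starMap_comp]⟩
  starMap_id Z := by apply TDAObj.hom_ext <;> rfl
  starMap_comp u v := by apply TDAObj.hom_ext <;> rfl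
  starMap_add u v := by apply TDAObj.hom_ext <;> rfl
  omega Z := ⟨𝟙 Z.M, 𝟙 Z.N,
    fun i => by
      simp only [Category.id_comp, (Hs i).starMap_id, Category.comp_id]
      rw [(Hs i).starMap_comp, ← Category.assoc, ← (Hs i).omega_natural (Z.f i),
        Category.assoc, (Hs i).omega_star, Category.comp_id],
    fun i => by
      simp only [Category.id_comp, (Hs i).starMap_id, Category.comp_id]
      rw [(Hs i).starMap_comp, ← Category.assoc, ← (Hs i).omega_natural (Z.g i),
        Category.assoc, (Hs i).omega_star, Category.comp_id]⟩
  omega_natural u := by apply TDAObj.hom_ext <;> simp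
  omega_star Z := by apply TDAObj.hom_ext <;> simp

/-! ## Biproducts in `TDA_I(C)` -/

namespace TDAObj

variable {Hs : ι → HermStructure C} [HasBinaryBiproducts C]

/-- The biproduct of two objects of `TDA_I(C)`. -/
def biprodObj (Z W : TDAObj Hs) : TDAObj Hs where
  M := Z.M ⊞ W.M
  N := Z.N ⊞ W.N
  f i := biprod.desc (Z.f i ≫ (Hs i).starMap biprod.fst) (W.f i ≫ (Hs i).starMap biprod.snd)
  g i := biprod.desc (Z.g i ≫ (Hs i).starMap biprod.fst) (W.g i ≫ (Hs i).starMap biprod.snd)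

/-- The binary bicone exhibiting `biprodObj Z W` as a biproduct. -/
def biprodBicone (Z W : TDAObj Hs) : BinaryBicone Z W where
  pt := biprodObj Z W
  fst := ⟨biprod.fst, biprod.inl,
    fun i => by
      apply biprod.hom_ext' <;>
      simp [biprodObj, ← (Hs i).starMap_comp, (Hs i).starMap_zero, (Hs i).starMap_id],
    fun i => by
      apply biprod.hom_ext' <;>
      simp [biprodObj, ← (Hs i).starMap_comp, (Hs i).starMap_zero, (Hs i).starMap_id]⟩
  snd := ⟨biprod.snd, biprod.inr,
    fun i => by
      apply biprod.hom_ext' <;>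
      simp [biprodObj, ← (Hs i).starMap_comp, (Hs i).starMap_zero, (Hs i).starMap_id],
    fun i => by
      apply biprod.hom_ext' <;>
      simp [biprodObj, ← (Hs i).starMap_comp, (Hs i).starMap_zero, (Hs i).starMap_id]⟩
  inl := ⟨biprod.inl, biprod.fst,
    fun i => by simp [biprodObj],
    fun i => by simp [biprodObj]⟩
  inr := ⟨biprod.inr, biprod.snd,
    fun i => by simp [biprodObj],
    fun i => by simp [biprodObj]⟩
  inl_fst := by apply hom_ext <;> exact biprod.inl_fst
  inl_snd := by apply hom_ext <;> first | exact biprod.inl_snd | exact biprod.inr_fst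
  inr_fst := by apply hom_ext <;> first | exact biprod.inl_snd | exact biprod.inr_fst
  inr_snd := by apply hom_ext <;> exact biprod.inr_snd

instance hasBinaryBiproducts : HasBinaryBiproducts (TDAObj Hs) where
  has_binary_biproduct Z W :=
    hasBinaryBiproduct_of_total (biprodBicone Z W) (by apply hom_ext <;> exact biprod.total)

end TDAObj

/-! ## Isomorphisms in `TDA_I(C)` -/

namespace TDAObj

variable {Hs : ι → HermStructure C}

theorem isIso_of {Z Z' : TDAObj Hs} (u : Z ⟶ Z') (h1 : IsIso u.φ) (h2 : IsIso u.ψ) :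
    IsIso u := by
  refine ⟨⟨⟨inv u.φ, inv u.ψ, fun i => ?_, fun i => ?_⟩, ?_, ?_⟩⟩
  · have h := u.condf i
    have : Z'.f i = inv u.φ ≫ Z.f i ≫ (Hs i).starMap u.ψ := by
      rw [← h, IsIso.inv_hom_id_assoc]
    rw [this, Category.assoc, Category.assoc, ← (Hs i).starMap_comp,
      IsIso.inv_hom_id, (Hs i).starMap_id, Category.comp_id]
  · have h := u.condg i
    have : Z'.g i = inv u.φ ≫ Z.g i ≫ (Hs i).starMap u.ψ := by
      rw [← h, IsIso.inv_hom_id_assoc]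
    rw [this, Category.assoc, Category.assoc, ← (Hs i).starMap_comp,
      IsIso.inv_hom_id, (Hs i).starMap_id, Category.comp_id]
  · apply hom_ext <;> simp
  · apply hom_ext <;> simp

end TDAObj

/-! ## Categories of (systems of) sesquilinear forms -/

/-- Objects of the category `Sesq(C)` of sesquilinear forms over `(C, H)`. -/
structure FormObj (H : HermStructure C) : Type (max u v) where
  pt : C
  form : pt ⟶ H.star pt

namespace FormObj

variable {H : HermStructure C}

/-- `Sesq(C)`: morphisms are isometries. -/
instance category : Category (FormObj H) where
  Hom X Y := { f : X.pt ⟶ Y.pt // H.IsIsometry X.form Y.form f }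
  id X := ⟨𝟙 X.pt, inferInstance, by simp [H.starMap_id]⟩
  comp {X Y Z} u v := ⟨u.1 ≫ v.1, by
    obtain ⟨uf, hu1, hu2⟩ := u
    obtain ⟨vf, hv1, hv2⟩ := v
    haveI := hu1; haveI := hv1
    refine ⟨inferInstance, ?_⟩
    show X.form = (uf ≫ vf) ≫ Z.form ≫ H.starMap (uf ≫ vf)
    rw [hu2, hv2, H.starMap_comp]
    simp⟩
  id_comp u := by apply Subtype.ext; simp
  comp_id u := by apply Subtype.ext; simp
  assoc u v w := by apply Subtype.ext; simp

@[simp] theorem id_val (X : FormObj H) : (𝟙 X : X ⟶ X).1 = 𝟙 X.pt := rfl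
@[simp] theorem comp_val {X Y Z : FormObj H} (u : X ⟶ Y) (v : Y ⟶ Z) :
    (u ≫ v).1 = u.1 ≫ v.1 := rfl

end FormObj

/-- The predicate selecting unimodular `ε`-hermitian forms. -/
def hermPred (H : HermStructure C) (ε : ℤ) : FormObj H → Prop :=
  fun X => H.IsUnimodular X.form ∧ H.IsEpsHermitian ε X.form

/-- The category `Herm_ε(C)` of unimodular `ε`-hermitian forms over `(C, H)`. -/
abbrev HermFormCat (H : HermStructure C) (ε : ℤ) := ObjectProperty.FullSubcategory (hermPred H ε)

/-- Objects of the category of systems of sesquilinear forms over `(C, {(*_i, ω_i)})`. -/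
structure SysFormObj (Hs : ι → HermStructure C) : Type (max u v) where
  pt : C
  form : ∀ i, pt ⟶ (Hs i).star pt

namespace SysFormObj

variable {Hs : ι → HermStructure C}

/-- `f` is an isometry of systems of sesquilinear forms. -/
def IsIsometry (X Y : SysFormObj Hs) (f : X.pt ⟶ Y.pt) : Prop :=
  IsIso f ∧ ∀ i, X.form i = f ≫ Y.form i ≫ (Hs i).starMap f

/-- Two systems of sesquilinear forms are isometric. -/
def Isometric (X Y : SysFormObj Hs) : Prop := ∃ f, IsIsometry X Y f

/-- The category of systems of sesquilinear forms, with isometries as morphisms. -/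
instance category : Category (SysFormObj Hs) where
  Hom X Y := { f : X.pt ⟶ Y.pt // IsIsometry X Y f }
  id X := ⟨𝟙 X.pt, inferInstance, fun i => by simp [(Hs i).starMap_id]⟩
  comp {X Y Z} u v := ⟨u.1 ≫ v.1, by
    obtain ⟨uf, hu1, hu2⟩ := u
    obtain ⟨vf, hv1, hv2⟩ := v
    haveI := hu1; haveI := hv1
    refine ⟨inferInstance, fun i => ?_⟩
    show X.form i = (uf ≫ vf) ≫ Z.form i ≫ (Hs i).starMap (uf ≫ vf)
    rw [hu2 i, hv2 i, (Hs i).starMap_comp]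
    simp⟩
  id_comp u := by apply Subtype.ext; simp
  comp_id u := by apply Subtype.ext; simp
  assoc u v w := by apply Subtype.ext; simp

/-- The orthogonal sum of two systems of sesquilinear forms. -/
def orthSum [HasBinaryBiproducts C] (X Y : SysFormObj Hs) : SysFormObj Hs where
  pt := X.pt ⊞ Y.pt
  form i := biprod.desc (X.form i ≫ (Hs i).starMap biprod.fst)
    (Y.form i ≫ (Hs i).starMap biprod.snd)

end SysFormObj

/-! ## The functor `F` from (systems of) sesquilinear forms to hermitian forms over `TDA` -/

section FFunctor

variable {Hs : ι → HermStructure C}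

theorem HermStructure.omega_starMap_key (H : HermStructure C) {M : C}
    (s : M ⟶ H.star M) :
    H.omega M ≫ H.starMap (H.omega M ≫ H.starMap s) = s := by
  rw [H.starMap_comp, ← Category.assoc, ← H.omega_natural s, Category.assoc,
    H.omega_star, Category.comp_id]

/-- The twisted double arrow `Z(M, {s_i}) = (M, M, {s_i^* ∘ ω_M}, {s_i})` associated with a
system of sesquilinear forms. -/
def sysZ {M : C} (s : ∀ i, M ⟶ (Hs i).star M) : TDAObj Hs :=
  ⟨M, M, fun i => (Hs i).omega M ≫ (Hs i).starMap (s i), fun i => s i⟩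

/-- The canonical `1`-hermitian form `(id_M, id_M^op)` on `Z(M, {s_i})`. -/
def sysZForm {M : C} (s : ∀ i, M ⟶ (Hs i).star M) :
    sysZ s ⟶ (tdaHerm Hs).star (sysZ s) :=
  ⟨𝟙 M, 𝟙 M,
    fun i => by
      simp only [tdaHerm, sysZ, Category.id_comp, (Hs i).starMap_id, Category.comp_id],
    fun i => by
      simp only [tdaHerm, sysZ, Category.id_comp, (Hs i).starMap_id, Category.comp_id]
      rw [(Hs i).omega_starMap_key]⟩

theorem sysZForm_isIso {M : C} (s : ∀ i, M ⟶ (Hs i).star M) : IsIso (sysZForm s) :=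
  TDAObj.isIso_of (sysZForm s) (inferInstanceAs (IsIso (𝟙 M)))
    (inferInstanceAs (IsIso (𝟙 M)))

theorem sysZForm_unimodular {M : C} (s : ∀ i, M ⟶ (Hs i).star M) :
    (tdaHerm Hs).IsUnimodular (sysZForm s) := by
  constructor
  · exact sysZForm_isIso s
  · exact TDAObj.isIso_of _ (inferInstanceAs (IsIso (𝟙 M ≫ 𝟙 M)))
      (inferInstanceAs (IsIso (𝟙 M ≫ 𝟙 M)))

theorem sysZForm_hermitian {M : C} (s : ∀ i, M ⟶ (Hs i).star M) :
    (tdaHerm Hs).IsEpsHermitian 1 (sysZForm s) := by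
  apply TDAObj.hom_ext <;> simp [tdaHerm, sysZForm] <;> (show 𝟙 M = (1 : ℤ) • (𝟙 M ≫ 𝟙 M); simp)

/-- The object part of the functor `F`. -/
def Fobj (X : SysFormObj Hs) : HermFormCat (tdaHerm Hs) 1 :=
  ⟨⟨sysZ X.form, sysZForm X.form⟩, ⟨sysZForm_unimodular X.form, sysZForm_hermitian X.form⟩⟩

/-- The map part of the functor `F`. -/
def Fmap {X Y : SysFormObj Hs} (u : X ⟶ Y) : Fobj X ⟶ Fobj Y := by
  haveI : IsIso u.1 := u.2.1
  refine ⟨⟨⟨u.1, (inv u.1 : Y.pt ⟶ X.pt), fun i => ?_, fun i => ?_⟩, ?_, ?_⟩⟩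
  · show u.1 ≫ (Hs i).omega Y.pt ≫ (Hs i).starMap (Y.form i) =
      ((Hs i).omega X.pt ≫ (Hs i).starMap (X.form i)) ≫ (Hs i).starMap (inv u.1)
    calc u.1 ≫ (Hs i).omega Y.pt ≫ (Hs i).starMap (Y.form i)
        = (Hs i).omega X.pt ≫ (Hs i).starMap ((Hs i).starMap u.1) ≫
            (Hs i).starMap (Y.form i) := by
          rw [← Category.assoc, (Hs i).omega_natural u.1, Category.assoc]
      _ = (Hs i).omega X.pt ≫ (Hs i).starMap (Y.form i ≫ (Hs i).starMap u.1) := by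
          rw [(Hs i).starMap_comp]
      _ = (Hs i).omega X.pt ≫ (Hs i).starMap (inv u.1 ≫ X.form i) := by
          rw [u.2.2 i, IsIso.inv_hom_id_assoc]
      _ = ((Hs i).omega X.pt ≫ (Hs i).starMap (X.form i)) ≫ (Hs i).starMap (inv u.1) := by
          rw [(Hs i).starMap_comp, Category.assoc]
  · show u.1 ≫ Y.form i = X.form i ≫ (Hs i).starMap (inv u.1)
    rw [u.2.2 i, Category.assoc, Category.assoc, ← (Hs i).starMap_comp,
      IsIso.inv_hom_id, (Hs i).starMap_id, Category.comp_id]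
  · exact TDAObj.isIso_of _ (by show IsIso u.1; infer_instance)
      (by show IsIso (inv u.1); infer_instance)
  · apply TDAObj.hom_ext
    · show 𝟙 X.pt = u.1 ≫ 𝟙 Y.pt ≫ inv u.1
      simp
    · show 𝟙 X.pt = (u.1 ≫ 𝟙 Y.pt) ≫ inv u.1
      simp

/-- The functor `F` from systems of sesquilinear forms over `(C, {(*_i, ω_i)})` to
unimodular `1`-hermitian forms over `TDA_I(C)`, given by
`F(M, {s_i}) = ((M, M, {s_i^{*_i} ∘ ω_{i,M}}, {s_i}), (id_M, id_M^op))` and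
`F(ψ) = (ψ, (ψ⁻¹)^op)`. -/
def Ffunctor (Hs : ι → HermStructure C) : SysFormObj Hs ⥤ HermFormCat (tdaHerm Hs) 1 where
  obj := Fobj
  map := Fmap
  map_id X := by
    haveI : IsIso ((𝟙 X : X ⟶ X).1) := (𝟙 X : X ⟶ X).2.1
    apply InducedCategory.hom_ext; apply Subtype.ext; apply TDAObj.hom_ext
    · rfl
    · show inv ((𝟙 X : X ⟶ X).1) = 𝟙 X.pt
      change inv (𝟙 X.pt) = 𝟙 X.pt
      simp
  map_comp {X Y Z} u v := by
    haveI := u.2.1; haveI := v.2.1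
    haveI : IsIso ((u ≫ v).1) := (u ≫ v).2.1
    apply InducedCategory.hom_ext; apply Subtype.ext; apply TDAObj.hom_ext
    · rfl
    · show inv ((u ≫ v).1) = inv v.1 ≫ inv u.1
      change inv (u.1 ≫ v.1) = inv v.1 ≫ inv u.1
      simp

end FFunctor

end HermCat

namespace HermCat

variable {C : Type u} [Category.{v} C] [Preadditive C]

/-- The canonical identification of sesquilinear forms over `(C, H)` with systems of
sesquilinear forms indexed by a one-element set. -/
def toSys (H : HermStructure C) : FormObj H ⥤ SysFormObj (fun _ : PUnit.{v + 1} => H) where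
  obj X := ⟨X.pt, fun _ => X.form⟩
  map u := ⟨u.1, u.2.1, fun _ => u.2.2⟩
  map_id X := rfl
  map_comp u v := rfl

/-- The functor `F : Sesq(C) → Herm₁(TDA(C))` defined by
`F(M, s) = ((M, M, s* ∘ ω_M, s), (id_M, id_M^op))` on objects and
`F(ψ) = (ψ, (ψ⁻¹)^op)` on isometries. -/
def Fsesq (H : HermStructure C) :
    FormObj H ⥤ HermFormCat (tdaHerm (fun _ : PUnit.{v + 1} => H)) 1 :=
  toSys H ⋙ Ffunctor (fun _ : PUnit.{v + 1} => H)


/-! A unimodular `1`-hermitian form `t` on a twisted double arrow `(M, N, f, g)` has equal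
components `t.φ = t.ψ =: α`, an isomorphism `M ≅ N`. Transport along `α` identifies
`(M, N, f, g)` with `(M, M, s* ∘ ω_M, s)` for `s = α* ∘ g`, and `t` with `(id_M, id_M^op)`;
this gives essential surjectivity. An isometry `(φ, ψ^op)` between two forms of the shape
`(id, id^op)` satisfies `ψ ∘ φ = id`, so it is determined by `φ`, which is then an isometry
of the underlying sesquilinear forms; this gives full faithfulness. -/

namespace HermStructure

variable (H : HermStructure C)

theorem omega_comp_starMap_comp_starMap {X Y N : C} (α : Y ⟶ N) (g : X ⟶ H.star N) :
    H.omega Y ≫ H.starMap (g ≫ H.starMap α) = α ≫ H.omega N ≫ H.starMap g := by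
  rw [H.starMap_comp, ← Category.assoc, ← H.omega_natural α, Category.assoc]

theorem isIsometry_inv {M M' : C} {s : M ⟶ H.star M} {s' : M' ⟶ H.star M'} (f : M ⟶ M')
    [IsIso f] (hf : s = f ≫ s' ≫ H.starMap f) : H.IsIsometry s' s (inv f) := by
  refine ⟨inferInstance, ?_⟩
  simp only [hf, Category.assoc, IsIso.inv_hom_id_assoc, ← H.starMap_comp, IsIso.inv_hom_id,
    H.starMap_id, Category.comp_id]

theorem isIsometry_of_comp_eq {M M' : C} {s : M ⟶ H.star M} {s' : M' ⟶ H.star M'}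
    {φ : M ⟶ M'} {ψ : M' ⟶ M} [IsIso φ] (hφψ : φ ≫ ψ = 𝟙 M)
    (h : φ ≫ s' = s ≫ H.starMap ψ) : H.IsIsometry s s' φ := by
  refine ⟨inferInstance, ?_⟩
  rw [reassoc_of% h, ← H.starMap_comp, hφψ, H.starMap_id, Category.comp_id]

end HermStructure

instance FormObj.isIso {H : HermStructure C} {X Y : FormObj H} (u : X ⟶ Y) : IsIso u :=
  have := u.2.1
  ⟨⟨inv u.1, H.isIsometry_inv u.1 u.2.2⟩, Subtype.ext (IsIso.hom_inv_id u.1),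
    Subtype.ext (IsIso.inv_hom_id u.1)⟩

section TDA

variable {ι : Type v} {Hs : ι → HermStructure C}

namespace TDAObj

instance isIso_φ {Z Z' : TDAObj Hs} (u : Z ⟶ Z') [IsIso u] : IsIso u.φ :=
  ⟨(inv u).φ, by rw [← comp_φ, IsIso.hom_inv_id, id_φ],
    by rw [← comp_φ, IsIso.inv_hom_id, id_φ]⟩

theorem φ_eq_zsmul_ψ_of_isEpsHermitian {Z : TDAObj Hs} {ε : ℤ}
    {t : Z ⟶ (tdaHerm Hs).star Z} (ht : (tdaHerm Hs).IsEpsHermitian ε t) :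
    t.φ = ε • t.ψ :=
  (congrArg Hom.φ ht).trans (congrArg (ε • ·) (Category.id_comp t.ψ))

end TDAObj

theorem φ_comp_ψ_of_isIsometry_sysZForm {M M' : C} {s : ∀ i, M ⟶ (Hs i).star M}
    {s' : ∀ i, M' ⟶ (Hs i).star M'} {t : sysZ s ⟶ sysZ s'}
    (ht : (tdaHerm Hs).IsIsometry (sysZForm s) (sysZForm s') t) : t.φ ≫ t.ψ = 𝟙 M :=
  ((congrArg TDAObj.Hom.φ ht.2).trans (congrArg (t.φ ≫ ·) (Category.id_comp t.ψ))).symm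

theorem isIsometry_φ_of_isIsometry_sysZForm {X Y : SysFormObj Hs}
    {t : sysZ X.form ⟶ sysZ Y.form}
    (ht : (tdaHerm Hs).IsIsometry (sysZForm X.form) (sysZForm Y.form) t) :
    SysFormObj.IsIsometry X Y t.φ := by
  have := ht.1
  exact ⟨TDAObj.isIso_φ t, fun i =>
    ((Hs i).isIsometry_of_comp_eq (φ_comp_ψ_of_isIsometry_sysZForm ht) (t.condg i)).2⟩

variable {Z : TDAObj Hs} (t : Z ⟶ (tdaHerm Hs).star Z) {α : Z.M ⟶ Z.N} [IsIso α]
  (hφ : t.φ = α) (hψ : t.ψ = α)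

def sysZHomOfForm : sysZ (fun i => Z.g i ≫ (Hs i).starMap α) ⟶ Z where
  φ := 𝟙 Z.M
  ψ := (inv α : Z.N ⟶ Z.M)
  condf i := by
    have hf : α ≫ (Hs i).omega Z.N ≫ (Hs i).starMap (Z.g i) = Z.f i ≫ (Hs i).starMap α := by
      have := t.condf i
      rw [hφ, hψ] at this
      exact this
    dsimp [sysZ]
    rw [(Hs i).omega_comp_starMap_comp_starMap, hf, Category.assoc, ← (Hs i).starMap_comp,
      IsIso.inv_hom_id, (Hs i).starMap_id, Category.comp_id, Category.id_comp]
  condg i := by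
    dsimp [sysZ]
    rw [Category.assoc, ← (Hs i).starMap_comp, IsIso.inv_hom_id, (Hs i).starMap_id,
      Category.comp_id, Category.id_comp]

theorem isIsometry_sysZHomOfForm :
    (tdaHerm Hs).IsIsometry (sysZForm _) t (sysZHomOfForm t hφ hψ) := by
  refine ⟨TDAObj.isIso_of (sysZHomOfForm t hφ hψ) (inferInstanceAs (IsIso (𝟙 Z.M)))
    (inferInstanceAs (IsIso (inv α : Z.N ⟶ Z.M))), TDAObj.hom_ext ?_ ?_⟩
  · show 𝟙 Z.M = 𝟙 Z.M ≫ t.φ ≫ (inv α : Z.N ⟶ Z.M)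
    rw [hφ, Category.id_comp]
    exact (IsIso.hom_inv_id α).symm
  · show 𝟙 Z.M = (𝟙 Z.M ≫ t.ψ) ≫ (inv α : Z.N ⟶ Z.M)
    rw [hψ]
    simp

end TDA

section Ffunctor

variable {ι : Type v} {Hs : ι → HermStructure C}

theorem Fobj_hom_ext {X Y : SysFormObj Hs} {w w' : Fobj X ⟶ Fobj Y}
    (h : w.hom.1.φ = w'.hom.1.φ) : w = w' := by
  have := w.hom.2.1
  refine InducedCategory.hom_ext (Subtype.ext (TDAObj.hom_ext h ?_))
  refine (cancel_epi w.hom.1.φ).1 ?_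
  exact (φ_comp_ψ_of_isIsometry_sysZForm w.hom.2).trans
    ((φ_comp_ψ_of_isIsometry_sysZForm w'.hom.2).symm.trans (congrArg (· ≫ _) h.symm))

instance : (Ffunctor Hs).Faithful where
  map_injective h := Subtype.ext (congrArg (fun w => w.hom.1.φ) h)

instance : (Ffunctor Hs).Full where
  map_surjective w :=
    ⟨⟨w.hom.1.φ, isIsometry_φ_of_isIsometry_sysZForm w.hom.2⟩, Fobj_hom_ext rfl⟩

instance : (Ffunctor Hs).EssSurj where
  mem_essImage W := by
    obtain ⟨⟨Z, t⟩, ⟨ht_iso, -⟩, ht_herm⟩ := W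
    -- `t.φ` lives in `Z.M ⟶ (Z*).M`; instance search only sees `Z.M ⟶ Z.N` after renaming
    obtain ⟨α, hφ⟩ : ∃ α : Z.M ⟶ Z.N, t.φ = α := ⟨_, rfl⟩
    have hψ : t.ψ = α := by
      rw [← hφ, TDAObj.φ_eq_zsmul_ψ_of_isEpsHermitian ht_herm, one_smul]
    have : IsIso α := hφ ▸ TDAObj.isIso_φ t
    exact ⟨⟨Z.M, fun i => Z.g i ≫ (Hs i).starMap α⟩,
      ⟨ObjectProperty.isoMk _ (asIso ⟨_, isIsometry_sysZHomOfForm t hφ hψ⟩)⟩⟩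

instance : (Ffunctor Hs).IsEquivalence where

end Ffunctor

section toSys

variable (H : HermStructure C)

instance : (toSys H).Faithful where
  map_injective h := Subtype.ext (congrArg (fun u => u.1) h)

instance : (toSys H).Full where
  map_surjective u := ⟨⟨u.1, u.2.1, u.2.2 PUnit.unit⟩, rfl⟩

instance : (toSys H).EssSurj where
  mem_essImage Y := ⟨⟨Y.pt, Y.form PUnit.unit⟩, ⟨Iso.refl _⟩⟩

instance : (toSys H).IsEquivalence where

end toSys

/-- `F` is an equivalence between the category of sesquilinear forms over
`C` and the category of unimodular `1`-hermitian forms over `TDA(C)`. -/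
theorem Fsesq_isEquivalence (H : HermStructure C) : (Fsesq H).IsEquivalence :=
  inferInstanceAs (toSys H ⋙ Ffunctor _).IsEquivalence

end HermCat
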